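/- arXiv:2303.10764 — 2 statements merged into one kernel-verified Lean document; each statement's English description precedes it below -/
import Mathlib

section
/- If |λ| < 1 and |μ| < 1, then the action of the cyclic group generated by the diagonal map (x,y) ↦ (λx, μy) on ℂ² ∖ {0} is free and properly discontinuous. -/
private lemma hopf_zpow_le (c : ℝ) (hc0 : 0 < c) (hc1 : c < 1)
    (a : ℝ) (ha : 0 < a) (hac : a ≤ c) : ∀ n : ℤ, 1 ≤ n → a ^ n ≤ c := by
  intro n hn
  lift n to ℕ using (by omega) with k
  rw [zpow_natCast]
  calc a ^ k ≤ c ^ k := pow_le_pow_left₀ ha.le hac k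
    _ ≤ c := pow_le_of_le_one hc0.le hc1.le (by exact_mod_cast (by omega : k ≠ 0))

private lemma hopf_zpow_ne_one (a : ℝ) (ha0 : 0 < a) (ha1 : a < 1) :
    ∀ n : ℤ, n ≠ 0 → a ^ n ≠ 1 := by
  intro n hn
  rcases lt_or_gt_of_ne hn with h | h
  · have h1 : (1:ℤ) ≤ -n := by omega
    have := hopf_zpow_le a ha0 ha1 a ha0 le_rfl (-n) h1
    have hpos : 0 < a ^ (-n) := zpow_pos ha0 _
    have : 1 < a ^ n := by
      rw [show n = -(-n) by ring, zpow_neg]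
      exact (one_lt_inv₀ hpos).mpr (lt_of_le_of_lt this ha1)
    exact ne_of_gt this
  · have := hopf_zpow_le a ha0 ha1 a ha0 le_rfl n (by omega)
    exact ne_of_lt (lt_of_le_of_lt this ha1)

/-- For `|λ| < 1`, `|μ| < 1` (λ, μ ≠ 0), the ℤ-action on `ℂ² ∖ {0}`
generated by `(x, y) ↦ (λx, μy)` preserves `ℂ² ∖ {0}`, is free, and is properly
discontinuous: every point has an open neighbourhood `U ⊆ ℂ² ∖ {0}` whose translates
by nonzero powers of the generator are disjoint from `U`. -/
theorem hopf_action_free_properly_discontinuous (lam mu : ℂ)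
    (hlam0 : lam ≠ 0) (hmu0 : mu ≠ 0)
    (hlam : ‖lam‖ < 1) (hmu : ‖mu‖ < 1) :
    let g : ℤ → ℂ × ℂ → ℂ × ℂ := fun n p => (lam ^ n * p.1, mu ^ n * p.2)
    let X : Set (ℂ × ℂ) := {p | p ≠ 0}
    (∀ n : ℤ, Set.MapsTo (g n) X X) ∧
    (∀ n : ℤ, n ≠ 0 → ∀ p ∈ X, g n p ≠ p) ∧
    (∀ p ∈ X, ∃ U : Set (ℂ × ℂ), IsOpen U ∧ p ∈ U ∧ U ⊆ X ∧
      ∀ n : ℤ, n ≠ 0 → Disjoint (g n '' U) U) := by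
  intro g X
  have hlamn : (0:ℝ) < ‖lam‖ := norm_pos_iff.mpr hlam0
  have hmun : (0:ℝ) < ‖mu‖ := norm_pos_iff.mpr hmu0
  have hlam1 : ‖lam‖ < 1 := by simpa using hlam
  have hmu1 : ‖mu‖ < 1 := by simpa using hmu
  set c : ℝ := max ‖lam‖ ‖mu‖ with hc
  have hc0 : 0 < c := lt_max_of_lt_left hlamn
  have hc1 : c < 1 := max_lt hlam1 hmu1
  -- the key contraction estimate
  have hkey : ∀ (q : ℂ × ℂ) (n : ℤ), 1 ≤ n → ‖g n q‖ ≤ c * ‖q‖ := by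
    intro q n hn
    have h1 : ‖lam ^ n * q.1‖ ≤ c * ‖q‖ := by
      rw [norm_mul, norm_zpow]
      exact mul_le_mul (hopf_zpow_le c hc0 hc1 ‖lam‖ hlamn (le_max_left _ _) n hn)
        (norm_fst_le q) (norm_nonneg _) hc0.le
    have h2 : ‖mu ^ n * q.2‖ ≤ c * ‖q‖ := by
      rw [norm_mul, norm_zpow]
      exact mul_le_mul (hopf_zpow_le c hc0 hc1 ‖mu‖ hmun (le_max_right _ _) n hn)
        (norm_snd_le q) (norm_nonneg _) hc0.le
    calc ‖g n q‖ = max ‖lam ^ n * q.1‖ ‖mu ^ n * q.2‖ := rfl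
      _ ≤ c * ‖q‖ := max_le h1 h2
  have hinv : ∀ (q : ℂ × ℂ) (n : ℤ), g (-n) (g n q) = q := by
    intro q n
    simp only [g, zpow_neg]
    ext
    · simp only
      exact inv_mul_cancel_left₀ (zpow_ne_zero n hlam0) q.1
    · simp only
      exact inv_mul_cancel_left₀ (zpow_ne_zero n hmu0) q.2
  refine ⟨?_, ?_, ?_⟩
  · -- MapsTo
    intro n p hp
    simp only [X, Set.mem_setOf_eq] at hp ⊢
    intro h
    apply hp
    have h1 : lam ^ n * p.1 = 0 ∧ mu ^ n * p.2 = 0 := by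
      constructor
      · exact congrArg Prod.fst h
      · exact congrArg Prod.snd h
    have hp1 : p.1 = 0 := by
      rcases mul_eq_zero.mp h1.1 with h' | h'
      · exact absurd h' (zpow_ne_zero n hlam0)
      · exact h'
    have hp2 : p.2 = 0 := by
      rcases mul_eq_zero.mp h1.2 with h' | h'
      · exact absurd h' (zpow_ne_zero n hmu0)
      · exact h'
    exact Prod.ext hp1 hp2
  · -- Free
    intro n hn p hp heq
    simp only [X, Set.mem_setOf_eq] at hp
    have h1 : lam ^ n * p.1 = p.1 := congrArg Prod.fst heq
    have h2 : mu ^ n * p.2 = p.2 := congrArg Prod.snd heq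
    have hcases : p.1 ≠ 0 ∨ p.2 ≠ 0 := by
      by_contra h
      push_neg at h
      exact hp (Prod.ext h.1 h.2)
    rcases hcases with h | h
    · have : lam ^ n = 1 :=
        mul_right_cancel₀ h (by rw [one_mul]; exact h1)
      have : ‖lam‖ ^ n = 1 := by rw [← norm_zpow, this, norm_one]
      exact hopf_zpow_ne_one ‖lam‖ hlamn hlam1 n hn this
    · have : mu ^ n = 1 :=
        mul_right_cancel₀ h (by rw [one_mul]; exact h2)
      have : ‖mu‖ ^ n = 1 := by rw [← norm_zpow, this, norm_one]
      exact hopf_zpow_ne_one ‖mu‖ hmun hmu1 n hn this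
  · -- Properly discontinuous
    intro p hp
    simp only [X, Set.mem_setOf_eq] at hp
    have hr : 0 < ‖p‖ := norm_pos_iff.mpr hp
    set r : ℝ := ‖p‖ with hrdef
    set s : ℝ := Real.sqrt c with hs
    have hs0 : 0 < s := Real.sqrt_pos.mpr hc0
    have hs1 : s < 1 := by
      rw [hs, show (1:ℝ) = Real.sqrt 1 by simp]
      exact Real.sqrt_lt_sqrt hc0.le hc1
    have hss : s * s = c := Real.mul_self_sqrt hc0.le
    refine ⟨(fun q => ‖q‖) ⁻¹' Set.Ioo (r * s) (r / s), (isOpen_Ioo).preimage continuous_norm,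
      ?_, ?_, ?_⟩
    · constructor
      · exact mul_lt_of_lt_one_right hr hs1
      · rw [lt_div_iff₀ hs0]
        exact mul_lt_of_lt_one_right hr hs1
    · intro q hq
      simp only [Set.mem_preimage, Set.mem_Ioo] at hq
      simp only [X, Set.mem_setOf_eq]
      intro h
      rw [h, norm_zero] at hq
      exact absurd hq.1 (not_lt.mpr (by positivity))
    · intro n hn
      rw [Set.disjoint_left]
      rintro a ⟨q, hq, rfl⟩ ha
      simp only [Set.mem_preimage, Set.mem_Ioo] at hq ha
      have hcs : c * (r / s) = r * s := by
        field_simp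
        nlinarith [hss]
      rcases lt_or_gt_of_ne hn with h | h
      · -- n ≤ -1 : then q = g (-n) (g n q) is contracted
        have h1 : (1:ℤ) ≤ -n := by omega
        have := hkey (g n q) (-n) h1
        rw [hinv q n] at this
        have : ‖q‖ < r * s := by
          calc ‖q‖ ≤ c * ‖g n q‖ := this
            _ < c * (r / s) := by
                apply mul_lt_mul_of_pos_left ha.2 hc0
            _ = r * s := hcs
        exact absurd hq.1 (not_lt.mpr this.le)
      · have := hkey q n (by omega)
        have : ‖g n q‖ < r * s := by
          calc ‖g n q‖ ≤ c * ‖q‖ := this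
            _ < c * (r / s) := mul_lt_mul_of_pos_left hq.2 hc0
            _ = r * s := hcs
        exact absurd ha.1 (not_lt.mpr this.le)
end

section
/- Let Λ act on ℂ × B_r by γ·(x,y) = (x+γ, ρ(γ)y) where Λ = ℤ+ℤτ is a lattice and ρ : Λ → U(1) has dense image, and let J : ℂ × B_r → ℂ × B_R be a holomorphic open embedding which is Λ-equivariant and restricts to the identity on ℂ × {0}. Then J(x,y) = (x, c·y) for some constant c ∈ ℂ* with |c| ≤ R/r. -/
open Metric Filter

lemma aux_zero_on_ball {ℓ : ℝ} (hℓ : 1 < ℓ) (F : ℂ → ℂ)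
    (hF : DifferentiableOn ℂ F (ball (0:ℂ) ℓ))
    (S : Set ℂ) (hS1 : ∀ z ∈ S, ‖z‖ = 1)
    (hdense : ∀ z : ℂ, ‖z‖ = 1 → z ∈ closure S)
    (hzero : ∀ z ∈ S, F z = 0) :
    ∀ z ∈ ball (0:ℂ) ℓ, F z = 0 := by
  have hA : AnalyticOnNhd ℂ F (ball 0 ℓ) := hF.analyticOnNhd isOpen_ball
  have hsub : ∀ z : ℂ, ‖z‖ = 1 → z ∈ ball (0:ℂ) ℓ := by
    intro z hz
    simp [mem_ball, Complex.dist_eq, hz, hℓ]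
  have hcirc : ∀ z : ℂ, ‖z‖ = 1 → F z = 0 := by
    intro z hz
    obtain ⟨u, hu, hulim⟩ := mem_closure_iff_seq_limit.mp (hdense z hz)
    have hc : ContinuousAt F z := (hA z (hsub z hz)).continuousAt
    have h2 : Tendsto (F ∘ u) atTop (nhds (F z)) := hc.tendsto.comp hulim
    have h0 : (F ∘ u) = fun _ => (0:ℂ) := funext fun n => hzero (u n) (hu n)
    rw [h0] at h2
    exact (tendsto_nhds_unique h2 tendsto_const_nhds)
  set u : ℕ → ℂ := fun n => Complex.exp (((1/(n+1) : ℝ) : ℂ) * Complex.I) with hu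
  have habs : ∀ n, ‖u n‖ = 1 := fun n => Complex.norm_exp_ofReal_mul_I _
  have hne : ∀ n, u n ≠ 1 := by
    intro n h
    rw [hu] at h
    obtain ⟨k, hk⟩ := Complex.exp_eq_one_iff.mp h
    have hk' : ((1/(n+1) : ℝ) : ℂ) * Complex.I = ((2 * Real.pi * k : ℝ) : ℂ) * Complex.I := by
      rw [hk]; push_cast; ring
    have hkr : (1/(n+1) : ℝ) = 2 * Real.pi * k :=
      Complex.ofReal_inj.mp (mul_right_cancel₀ Complex.I_ne_zero hk')
    have hpos : (0:ℝ) < 1/(n+1) := by positivity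
    have hlt : (1/(n+1) : ℝ) ≤ 1 := by
      rw [div_le_one (by positivity)]; linarith [Nat.cast_nonneg (α := ℝ) n]
    rcases le_or_gt (k:ℝ) 0 with h1 | h1
    · nlinarith [Real.pi_pos]
    · have : (1:ℝ) ≤ k := by exact_mod_cast (by exact_mod_cast h1 : (0:ℤ) < k)
      nlinarith [Real.pi_gt_three]
  have hlim : Tendsto u atTop (nhds 1) := by
    have h1 : Tendsto (fun n : ℕ => ((1/(n+1) : ℝ) : ℂ) * Complex.I) atTop (nhds 0) := by
      have := tendsto_one_div_add_atTop_nhds_zero_nat (𝕜 := ℝ)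
      have h2 : Tendsto (fun n : ℕ => ((1/(n+1) : ℝ) : ℂ)) atTop (nhds 0) := by
        rw [show ((0:ℂ)) = ((0:ℝ):ℂ) by norm_num]
        exact (Complex.continuous_ofReal.tendsto _).comp (by simpa using this)
      simpa using h2.mul_const Complex.I
    have h3 := (Complex.continuous_exp.tendsto 0).comp h1
    rw [hu]
    simpa [Function.comp_def, Complex.exp_zero] using h3
  have hfreq : ∃ᶠ z in nhdsWithin 1 {(1:ℂ)}ᶜ, F z = 0 := by
    have hmem : Tendsto u atTop (nhdsWithin 1 {(1:ℂ)}ᶜ) :=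
      tendsto_nhdsWithin_of_tendsto_nhds_of_eventually_within _ hlim
        (Eventually.of_forall hne)
    exact hmem.frequently (Frequently.of_forall fun n => hcirc _ (habs n))
  intro z hz
  exact hA.eqOn_zero_of_preconnected_of_frequently_eq_zero
    (convex_ball (0:ℂ) ℓ).isPreconnected (hsub 1 (by simp)) hfreq hz

lemma lattice_approx (τ : ℂ) (hτ : 0 < τ.im) (x : ℂ) :
    ∃ γ ∈ AddSubgroup.closure ({1, τ} : Set ℂ),
      ‖(x - γ)‖ ≤ 1 + ‖τ‖ := by
  set b : ℝ := x.im / τ.im with hb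
  set a : ℝ := x.re - b * τ.re with ha
  refine ⟨(⌊a⌋ : ℂ) + (⌊b⌋ : ℂ) * τ, ?_, ?_⟩
  · have h1 : (1:ℂ) ∈ AddSubgroup.closure ({1, τ} : Set ℂ) :=
      AddSubgroup.subset_closure (by simp)
    have h2 : τ ∈ AddSubgroup.closure ({1, τ} : Set ℂ) :=
      AddSubgroup.subset_closure (by simp)
    have h3 := AddSubgroup.zsmul_mem _ h1 ⌊a⌋
    have h4 := AddSubgroup.zsmul_mem _ h2 ⌊b⌋
    have := AddSubgroup.add_mem _ h3 h4
    simpa [zsmul_eq_mul] using this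
  · have hx : x = (a:ℂ) + (b:ℂ) * τ := by
      apply Complex.ext
      · simp [ha]
      · simp only [Complex.add_im, Complex.ofReal_im, Complex.mul_im, Complex.ofReal_re, zero_mul, add_zero, zero_add, hb]
        rw [div_mul_cancel₀ _ hτ.ne']
    have hxg : x - ((⌊a⌋ : ℂ) + (⌊b⌋ : ℂ) * τ)
        = ((a - ⌊a⌋ : ℝ) : ℂ) + ((b - ⌊b⌋ : ℝ) : ℂ) * τ := by
      rw [hx]; push_cast; ring
    rw [hxg]
    have h5 : ‖(((a - ⌊a⌋ : ℝ) : ℂ))‖ ≤ 1 := by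
      rw [Complex.norm_real, Real.norm_eq_abs]
      rw [abs_le]
      constructor <;> [linarith [Int.floor_le a]; linarith [Int.lt_floor_add_one a]]
    have h6 : ‖(((b - ⌊b⌋ : ℝ) : ℂ))‖ ≤ 1 := by
      rw [Complex.norm_real, Real.norm_eq_abs, abs_le]
      constructor <;> [linarith [Int.floor_le b]; linarith [Int.lt_floor_add_one b]]
    calc ‖(((a - ⌊a⌋ : ℝ) : ℂ) + ((b - ⌊b⌋ : ℝ) : ℂ) * τ)‖
        ≤ ‖(((a - ⌊a⌋ : ℝ) : ℂ))‖ + ‖(((b - ⌊b⌋ : ℝ) : ℂ) * τ)‖ :=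
          norm_add_le _ _
      _ ≤ 1 + 1 * ‖τ‖ := by
          rw [norm_mul]
          exact add_le_add h5 (mul_le_mul_of_nonneg_right h6 (norm_nonneg τ))
      _ = 1 + ‖τ‖ := by ring

open Metric Filter Bornology

/-- Let `Λ = ℤ+ℤτ` act on `ℂ × B_r` by `γ·(x,y) = (x+γ, ρ(γ)y)` where
`ρ : Λ → U(1)` is a character with dense image in the unit circle, and let
`J : ℂ × B_r → ℂ × B_R` (with `0 < r ≤ R`) be a holomorphic open embedding which is
`Λ`-equivariant and restricts to the identity on `ℂ × {0}`. Then `J(x,y) = (x, c·y)` for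
some constant `c ∈ ℂ*` with `|c| ≤ R/r`. -/
theorem equivariant_embedding_is_linear (τ : ℂ) (hτ : 0 < τ.im)
    (r R : ℝ) (hr : 0 < r) (hrR : r ≤ R)
    (ρ : AddSubgroup.closure ({1, τ} : Set ℂ) → ℂ)
    (hρ1 : ∀ γ, ‖ρ γ‖ = 1)
    (hρhom : ∀ γ δ, ρ (γ + δ) = ρ γ * ρ δ)
    (hρdense : ∀ z : ℂ, ‖z‖ = 1 → z ∈ closure (Set.range ρ))
    (J : ℂ × ℂ → ℂ × ℂ)
    (hJhol : DifferentiableOn ℂ J (Set.univ ×ˢ Metric.ball (0 : ℂ) r))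
    (hJinj : Set.InjOn J (Set.univ ×ˢ Metric.ball (0 : ℂ) r))
    (hJmap : Set.MapsTo J (Set.univ ×ˢ Metric.ball (0 : ℂ) r)
      (Set.univ ×ˢ Metric.ball (0 : ℂ) R))
    (hJequiv : ∀ γ : AddSubgroup.closure ({1, τ} : Set ℂ),
      ∀ x : ℂ, ∀ y ∈ Metric.ball (0 : ℂ) r,
        J (x + (γ : ℂ), ρ γ * y) = ((J (x, y)).1 + (γ : ℂ), ρ γ * (J (x, y)).2))
    (hJid : ∀ x : ℂ, J (x, 0) = (x, 0)) :
    ∃ c : ℂ, c ≠ 0 ∧ ‖c‖ ≤ R / r ∧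
      ∀ x : ℂ, ∀ y ∈ Metric.ball (0 : ℂ) r, J (x, y) = (x, c * y) := by
  have hopen : IsOpen (Set.univ ×ˢ Metric.ball (0:ℂ) r) := (isOpen_univ (X := ℂ)).prod Metric.isOpen_ball
  have hmemD : ∀ (x y : ℂ), y ∈ Metric.ball (0:ℂ) r → (x, y) ∈ Set.univ ×ˢ Metric.ball (0:ℂ) r :=
    fun x y hy => ⟨Set.mem_univ x, hy⟩
  have habsmem : ∀ y : ℂ, y ∈ Metric.ball (0:ℂ) r ↔ ‖y‖ < r := by
    intro y; rw [Metric.mem_ball, Complex.dist_eq, sub_zero]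
  have hρne : ∀ γ, ρ γ ≠ 0 := by
    intro γ h
    have := hρ1 γ
    rw [h] at this; simp at this
  have hJx : ∀ y ∈ Metric.ball (0:ℂ) r, Differentiable ℂ (fun x => J (x, y)) := by
    intro y hy x
    have h1 : DifferentiableAt ℂ J (x, y) :=
      hJhol.differentiableAt (hopen.mem_nhds (hmemD x y hy))
    exact h1.comp x (differentiableAt_id.prodMk (differentiableAt_const y))
  have hJy : DifferentiableOn ℂ (fun y => J (0, y)) (Metric.ball (0:ℂ) r) := by
    intro y hy
    have h1 : DifferentiableAt ℂ J (0, y) :=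
      hJhol.differentiableAt (hopen.mem_nhds (hmemD 0 y hy))
    exact (h1.comp y ((differentiableAt_const (0:ℂ)).prodMk differentiableAt_id)).differentiableWithinAt
  have hεdiff : DifferentiableOn ℂ (fun y : ℂ => (J (0,y)).1) (Metric.ball (0:ℂ) r) :=
    fun y hy => (hJy y hy).fst
  have hφdiff : DifferentiableOn ℂ (fun y : ℂ => (J (0,y)).2) (Metric.ball (0:ℂ) r) :=
    fun y hy => (hJy y hy).snd
  -- `g` does not depend on `x`
  have hgconst : ∀ y ∈ Metric.ball (0:ℂ) r, ∀ x, (J (x, y)).2 = (J (0, y)).2 := by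
    intro y hy x
    have hd : Differentiable ℂ (fun x => (J (x,y)).2) := fun z => (hJx y hy z).snd
    have hb : IsBounded (Set.range fun x => (J (x,y)).2) := by
      apply Metric.isBounded_ball.subset
      rintro _ ⟨x, rfl⟩
      exact (hJmap (hmemD x y hy)).2
    exact hd.apply_eq_apply_of_bounded hb x 0
  -- `f x y - x` does not depend on `x`
  have hfconst : ∀ y ∈ Metric.ball (0:ℂ) r, ∀ x, (J (x, y)).1 - x = (J (0, y)).1 := by
    intro y hy
    have hsr : ‖y‖ < r := (habsmem y).mp hy
    set K := Metric.closedBall (0:ℂ) (1 + ‖τ‖) ×ˢ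
      Metric.sphere (0:ℂ) (‖y‖) with hK
    have hKc : IsCompact K := (isCompact_closedBall _ _).prod (isCompact_sphere _ _)
    have hKsub : K ⊆ Set.univ ×ˢ Metric.ball (0:ℂ) r := by
      rintro ⟨p1, p2⟩ ⟨hp1, hp2⟩
      refine ⟨Set.mem_univ _, ?_⟩
      simp only [Metric.mem_sphere] at hp2
      rw [Metric.mem_ball, hp2]
      exact hsr
    have hcont : ContinuousOn (fun p : ℂ × ℂ => (J p).1 - p.1) K := by
      apply ContinuousOn.sub
      · exact continuous_fst.comp_continuousOn (hJhol.continuousOn.mono hKsub)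
      · exact continuous_fst.continuousOn
    obtain ⟨C, hC⟩ := hKc.exists_bound_of_continuousOn hcont
    have hbound : ∀ x : ℂ, ‖((J (x,y)).1 - x)‖ ≤ C := by
      intro x
      obtain ⟨γ, hγΛ, hγ⟩ := lattice_approx τ hτ x
      set γ' : AddSubgroup.closure ({1, τ} : Set ℂ) := ⟨γ, hγΛ⟩ with hγ'
      have hy'B : y / ρ γ' ∈ Metric.ball (0:ℂ) r := by
        rw [habsmem, norm_div, hρ1, div_one]; exact hsr
      have heq := hJequiv γ' (x - γ) (y / ρ γ') hy'B
      have h1 : ρ γ' * (y / ρ γ') = y := by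
        rw [mul_comm]; exact div_mul_cancel₀ y (hρne γ')
      have h2 : x - γ + (γ' : ℂ) = x := by
        simp only [hγ', AddSubgroup.coe_mk]; ring
      rw [h1, h2] at heq
      have h4 : (J (x,y)).1 - x = (J (x - γ, y / ρ γ')).1 - (x - γ) := by
        rw [heq]; push_cast; ring
      rw [h4]
      refine hC _ ⟨?_, ?_⟩
      · rw [Metric.mem_closedBall, Complex.dist_eq, sub_zero]; exact hγ
      · rw [Metric.mem_sphere, Complex.dist_eq, sub_zero, norm_div, hρ1, div_one]
    intro x
    have hd : Differentiable ℂ (fun x => (J (x,y)).1 - x) :=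
      Differentiable.sub (fun z => (hJx y hy z).fst) differentiable_id
    have hb : IsBounded (Set.range fun x => (J (x,y)).1 - x) := by
      apply (Metric.isBounded_closedBall (x := (0:ℂ)) (r := C)).subset
      rintro _ ⟨x, rfl⟩
      rw [Metric.mem_closedBall, Complex.dist_eq, sub_zero]
      exact hbound x
    have := hd.apply_eq_apply_of_bounded hb x 0
    simpa using this
  -- reduced equivariance
  have hρymem : ∀ (γ : AddSubgroup.closure ({1, τ} : Set ℂ)) (y : ℂ),
      y ∈ Metric.ball (0:ℂ) r → ρ γ * y ∈ Metric.ball (0:ℂ) r := by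
    intro γ y hy
    rw [habsmem, norm_mul, hρ1, one_mul]
    exact (habsmem y).mp hy
  have hεeq : ∀ (γ : AddSubgroup.closure ({1, τ} : Set ℂ)), ∀ y ∈ Metric.ball (0:ℂ) r,
      (J (0, ρ γ * y)).1 = (J (0, y)).1 := by
    intro γ y hy
    have heq := congrArg Prod.fst (hJequiv γ 0 y hy)
    simp only [] at heq
    have h2 := hfconst (ρ γ * y) (hρymem γ y hy) (0 + (γ:ℂ))
    rw [← h2, heq]
    ring
  have hφeq : ∀ (γ : AddSubgroup.closure ({1, τ} : Set ℂ)), ∀ y ∈ Metric.ball (0:ℂ) r,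
      (J (0, ρ γ * y)).2 = ρ γ * (J (0, y)).2 := by
    intro γ y hy
    have heq := congrArg Prod.snd (hJequiv γ 0 y hy)
    simp only [] at heq
    have h2 := hgconst (ρ γ * y) (hρymem γ y hy) (0 + (γ:ℂ))
    rw [← h2, heq]
  have hρrange : ∀ z ∈ Set.range ρ, ‖z‖ = 1 := by
    rintro _ ⟨γ, rfl⟩; exact hρ1 γ
  -- f(x,y) = x
  have hεzero : ∀ y ∈ Metric.ball (0:ℂ) r, (J (0, y)).1 = 0 := by
    intro y0 hy0
    rcases eq_or_ne y0 0 with rfl | hy0ne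
    · rw [hJid 0]
    · have hy0abs : 0 < ‖y0‖ := by
        simpa [norm_pos_iff] using hy0ne
      have hℓ : 1 < r / ‖y0‖ := by
        rw [lt_div_iff₀ hy0abs, one_mul]; exact (habsmem y0).mp hy0
      have hmaps : Set.MapsTo (fun l : ℂ => l * y0) (Metric.ball (0:ℂ) (r / ‖y0‖))
          (Metric.ball (0:ℂ) r) := by
        intro l hl
        rw [Metric.mem_ball, Complex.dist_eq, sub_zero] at hl ⊢
        rw [norm_mul]
        calc ‖l‖ * ‖y0‖
            < (r / ‖y0‖) * ‖y0‖ :=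
              mul_lt_mul_of_pos_right hl hy0abs
          _ = r := by field_simp
      have hFdiff : DifferentiableOn ℂ (fun l : ℂ => (J (0, l * y0)).1 - (J (0, y0)).1)
          (Metric.ball (0:ℂ) (r / ‖y0‖)) := by
        apply DifferentiableOn.sub_const
        exact hεdiff.comp ((differentiableOn_id).mul_const y0) hmaps
      have haux := aux_zero_on_ball hℓ _ hFdiff (Set.range ρ) hρrange hρdense
        (by rintro _ ⟨γ, rfl⟩; exact sub_eq_zero.mpr (hεeq γ y0 hy0))
      have h0 := haux 0 (Metric.mem_ball_self (by positivity))
      simp only [zero_mul, hJid 0] at h0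
      simpa [sub_eq_zero] using h0.symm
  -- g(x,y) = c y
  have hy0B : ((r/2 : ℝ) : ℂ) ∈ Metric.ball (0:ℂ) r := by
    rw [habsmem, Complex.norm_real, Real.norm_eq_abs, abs_of_pos (by linarith)]
    linarith
  have hy0ne : ((r/2 : ℝ) : ℂ) ≠ 0 := by
    simp only [ne_eq, Complex.ofReal_eq_zero]
    intro h; linarith
  set c : ℂ := (J (0, ((r/2 : ℝ) : ℂ))).2 / ((r/2 : ℝ) : ℂ) with hc
  have hφ : ∀ y ∈ Metric.ball (0:ℂ) r, (J (0, y)).2 = c * y := by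
    intro y hy
    have hy0abs : ‖((r/2 : ℝ) : ℂ)‖ = r/2 := by
      rw [Complex.norm_real, Real.norm_eq_abs]; exact abs_of_pos (by linarith)
    have hℓ : 1 < r / (r/2 : ℝ) := by
      rw [lt_div_iff₀ (by linarith : (0:ℝ) < r/2)]; linarith
    have hmaps : Set.MapsTo (fun l : ℂ => l * ((r/2 : ℝ) : ℂ))
        (Metric.ball (0:ℂ) (r / (r/2 : ℝ))) (Metric.ball (0:ℂ) r) := by
      intro l hl
      rw [Metric.mem_ball, Complex.dist_eq, sub_zero] at hl ⊢
      rw [norm_mul, hy0abs]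
      calc ‖l‖ * (r/2) < (r / (r/2)) * (r/2) :=
            mul_lt_mul_of_pos_right hl (by linarith)
        _ = r := by field_simp
    have hFdiff : DifferentiableOn ℂ
        (fun l : ℂ => (J (0, l * ((r/2 : ℝ) : ℂ))).2 - l * (J (0, ((r/2 : ℝ) : ℂ))).2)
        (Metric.ball (0:ℂ) (r / (r/2 : ℝ))) := by
      apply DifferentiableOn.sub
      · exact hφdiff.comp ((differentiableOn_id).mul_const _) hmaps
      · exact (differentiableOn_id).mul_const _
    have haux := aux_zero_on_ball hℓ _ hFdiff (Set.range ρ) hρrange hρdense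
      (by rintro _ ⟨γ, rfl⟩; exact sub_eq_zero.mpr (hφeq γ _ hy0B))
    have hlmem : y / ((r/2 : ℝ) : ℂ) ∈ Metric.ball (0:ℂ) (r / (r/2 : ℝ)) := by
      rw [Metric.mem_ball, Complex.dist_eq, sub_zero, norm_div, hy0abs]
      exact (div_lt_div_iff_of_pos_right (by linarith)).mpr ((habsmem y).mp hy)
    have h0 := haux _ hlmem
    rw [div_mul_cancel₀ y hy0ne] at h0
    have h1 : (J (0, y)).2 = y / ((r/2 : ℝ) : ℂ) * (J (0, ((r/2 : ℝ) : ℂ))).2 :=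
      sub_eq_zero.mp h0
    rw [h1, hc]; field_simp
  -- assemble
  have hform : ∀ x : ℂ, ∀ y ∈ Metric.ball (0:ℂ) r, J (x, y) = (x, c * y) := by
    intro x y hy
    have h1 : (J (x,y)).1 = x := by
      have := hfconst y hy x
      rw [hεzero y hy] at this
      linear_combination this
    have h2 : (J (x,y)).2 = c * y := by rw [hgconst y hy x, hφ y hy]
    exact Prod.ext h1 h2
  have hcne : c ≠ 0 := by
    intro h0
    have h1 := hform 0 _ hy0B
    rw [h0, zero_mul] at h1
    have h2 : ((0:ℂ), ((r/2 : ℝ) : ℂ)) = ((0:ℂ), (0:ℂ)) := by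
      apply hJinj (hmemD _ _ hy0B) (hmemD 0 0 (by rw [habsmem]; simpa using hr))
      rw [h1, hJid 0]
    exact hy0ne (congrArg Prod.snd h2)
  have hcle : ‖c‖ ≤ R / r := by
    rw [le_div_iff₀ hr]
    by_contra hlt
    push_neg at hlt
    have hcpos : 0 < ‖c‖ := norm_pos_iff.mpr hcne
    set t : ℝ := (R / ‖c‖ + r) / 2 with ht
    have h1 : R / ‖c‖ < r := (div_lt_iff₀ hcpos).mpr (by linarith)
    have h2 : R / ‖c‖ < t := by rw [ht]; linarith
    have h3 : t < r := by rw [ht]; linarith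
    have h4 : 0 < t := by
      have : 0 < R / ‖c‖ := div_pos (by linarith) hcpos
      linarith
    have htB : ((t:ℝ):ℂ) ∈ Metric.ball (0:ℂ) r := by
      rw [habsmem, Complex.norm_real, Real.norm_eq_abs, abs_of_pos h4]; exact h3
    have h5 := (hJmap (hmemD 0 _ htB)).2
    rw [hform 0 _ htB] at h5
    rw [Metric.mem_ball, Complex.dist_eq, sub_zero, norm_mul, Complex.norm_real, Real.norm_eq_abs,
      abs_of_pos h4] at h5
    have h6 : R < t * ‖c‖ := (div_lt_iff₀ hcpos).mp h2
    rw [mul_comm] at h6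
    linarith
  exact ⟨c, hcne, hcle, hform⟩
end
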